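/- For all x0, x1, x2 ∈ ℝ there exists a unique harmonic-type function U : K → ℝ with boundary values (x0,x1,x2). -/

import Mathlib

open MeasureTheory Filter Set
open scoped ENNReal NNReal Classical

noncomputable section

namespace SG

/-- The three vertices `p₀ = (0,0)`, `p₁ = (1,0)`, `p₂ = (1/2, √3/2)` viewed in `ℂ`. -/
def p : Fin 3 → ℂ := ![0, 1, 1/2 + (Real.sqrt 3 / 2) * Complex.I]

/-- The three contraction maps `fᵢ x = (x + pᵢ)/2`. -/
def f (i : Fin 3) (x : ℂ) : ℂ := (x + p i) / 2

/-- `K` is the Sierpinski gasket: the (unique) nonempty compact set with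
`K = f₀(K) ∪ f₁(K) ∪ f₂(K)`. -/
def IsSG (K : Set ℂ) : Prop :=
  K.Nonempty ∧ IsCompact K ∧ K = f 0 '' K ∪ f 1 '' K ∪ f 2 '' K

/-- `α = log 3 / log 2`. -/
def alpha : ℝ := Real.log 3 / Real.log 2

/-- `β* = log 5 / log 2`. -/
def betastar : ℝ := Real.log 5 / Real.log 2

/-- The normalized `α`-dimensional Hausdorff measure restricted to `K`. -/
def nu (K : Set ℂ) : Measure ℂ :=
  ((Measure.hausdorffMeasure alpha : Measure ℂ) K)⁻¹ •
    (Measure.hausdorffMeasure alpha : Measure ℂ).restrict K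

/-- `f_w` for a finite word `w` over `{0,1,2}` (empty word gives the identity). -/
def fwl : List (Fin 3) → ℂ → ℂ
  | [] => id
  | i :: t => f i ∘ fwl t

/-- `f_w` for a word `w ∈ W_n = {0,1,2}ⁿ`. -/
def fw {n : ℕ} (w : Fin n → Fin 3) : ℂ → ℂ := fwl (List.ofFn w)

/-- The cell `K_w = f_w(K)`. -/
def Kw (K : Set ℂ) {n : ℕ} (w : Fin n → Fin 3) : Set ℂ := fw w '' K

/-- Adjacency `w⁽¹⁾ ∼ₙ w⁽²⁾`: distinct words with intersecting cells. -/
def Adj (K : Set ℂ) {n : ℕ} (w1 w2 : Fin n → Fin 3) : Prop :=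
  w1 ≠ w2 ∧ (Kw K w1 ∩ Kw K w2).Nonempty

/-- `Pₙu(w) = ∫_K u(f_w(x)) ν(dx)`. -/
def P (K : Set ℂ) {n : ℕ} (u : ℂ → ℝ) (w : Fin n → Fin 3) : ℝ :=
  ∫ x, u (fw w x) ∂(nu K)

/-- `Aₙ(u)`: sum over unordered adjacent pairs in `W_n` of `(Pₙu(w⁽¹⁾) − Pₙu(w⁽²⁾))²`
(written as half the sum over ordered pairs). -/
def A (K : Set ℂ) (n : ℕ) (u : ℂ → ℝ) : ℝ :=
  (1/2) * ∑ w1 : Fin n → Fin 3, ∑ w2 : Fin n → Fin 3,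
    if Adj K w1 w2 then (P K u w1 - P K u w2)^2 else 0

/-- The remaining index of `{0,1,2}` besides `i` and `j` (when `i ≠ j`):
since `0+1+2 = 0` in `Fin 3`, it is `-(i+j)`. -/
def other (i j : Fin 3) : Fin 3 := -(i + j)

/-- `U : K → ℝ` is harmonic-type with boundary values `(x0, x1, x2)`:
continuous on `K`, `U(pᵢ) = xᵢ`, and for every finite word `w` and distinct `i, j`
(with `k` the remaining index),
`U(f_w((pᵢ+pⱼ)/2)) = (2 U(f_w(pᵢ)) + 2 U(f_w(pⱼ)) + U(f_w(p_k)))/5`. -/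
def IsHarm (K : Set ℂ) (x0 x1 x2 : ℝ) (U : ℂ → ℝ) : Prop :=
  ContinuousOn U K ∧ U (p 0) = x0 ∧ U (p 1) = x1 ∧ U (p 2) = x2 ∧
  ∀ (w : List (Fin 3)) (i j : Fin 3), i ≠ j →
    U (fwl w ((p i + p j) / 2)) =
      (2 * U (fwl w (p i)) + 2 * U (fwl w (p j)) + U (fwl w (p (other i j)))) / 5
end SG

/-!
In barycentric coordinates `bary` the maps `f i` act by `λ ↦ (λ + eᵢ) / 2`; looking at a point
of `K` where a coordinate is minimal shows that `K` lies in the triangle, and then two distinct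
cells `f i '' K`, `f j '' K` can only share the midpoint `f i (p j) = f j (p i)`. Hence the
functions `approx K n v`, affine on each cell of level `n` and interpolating the vertex values
prescribed by the rule, are well defined and continuous on `K`. Each cell's vertex values
oscillate by at most `3/5` of those of its parent, so `approx K n v` converges uniformly to a
continuous harmonic-type function. Uniqueness: the rule determines any harmonic-type function on
the vertices `f_w (p 0)`, which are dense in `K`.
-/

open scoped Topology

/-- At a minimum point `x = F i y` of `g` on `K`, `g x ≥ c * g y ≥ c * g x`. -/
theorem nonneg_of_le_comp_of_subset_iUnion {X ι : Type*} [TopologicalSpace X] {K : Set X}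
    (hK : IsCompact K) {F : ι → X → X} (hcover : K ⊆ ⋃ i, F i '' K) {g : X → ℝ}
    (hg : ContinuousOn g K) {c : ℝ} (hc0 : 0 ≤ c) (hc1 : c < 1)
    (hgF : ∀ i, ∀ y ∈ K, c * g y ≤ g (F i y)) {z : X} (hz : z ∈ K) : 0 ≤ g z := by
  obtain ⟨x, hxK, hmin⟩ := hK.exists_isMinOn ⟨z, hz⟩ hg
  obtain ⟨i, y, hyK, rfl⟩ : ∃ i, ∃ y ∈ K, F i y = x := by simpa using hcover hxK
  have hxy := isMinOn_iff.mp hmin y hyK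
  have hxz := isMinOn_iff.mp hmin z hz
  nlinarith [hgF i y hyK]

theorem eq_half_of_half_le {ι : Type*} [Fintype ι] [DecidableEq ι] {w : ι → ℝ}
    (hw0 : ∀ k, 0 ≤ w k) (hw1 : ∑ k, w k = 1) {i j : ι} (hij : i ≠ j)
    (hi : 1 / 2 ≤ w i) (hj : 1 / 2 ≤ w j) (k : ι) :
    w k = ((Pi.single i 1 : ι → ℝ) k + (Pi.single j 1 : ι → ℝ) k) / 2 := by
  have hsum_le : ∀ s : Finset ι, ∑ k ∈ s, w k ≤ 1 := fun s =>
    hw1 ▸ Finset.sum_le_univ_sum_of_nonneg hw0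
  have hij' := hsum_le {i, j}
  rw [Finset.sum_pair hij] at hij'
  by_cases hki : k = i
  · subst hki
    rw [Pi.single_eq_same, Pi.single_eq_of_ne hij]
    linarith
  by_cases hkj : k = j
  · subst hkj
    rw [Pi.single_eq_of_ne hki, Pi.single_eq_same]
    linarith
  have hk := hsum_le {i, j, k}
  rw [Finset.sum_insert (by simp [hij, Ne.symm hki]), Finset.sum_pair (Ne.symm hkj)] at hk
  rw [Pi.single_eq_of_ne hki, Pi.single_eq_of_ne hkj]
  linarith [hw0 k]

theorem abs_sum_mul_le_of_sum_eq_one {ι : Type*} [Fintype ι] {c w : ι → ℝ} {M : ℝ}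
    (hw0 : ∀ k, 0 ≤ w k) (hw1 : ∑ k, w k = 1) (hc : ∀ k, |c k| ≤ M) :
    |∑ k, c k * w k| ≤ M :=
  calc |∑ k, c k * w k| ≤ ∑ k, |c k| * w k := by
        simpa only [abs_mul, abs_of_nonneg (hw0 _)] using
          Finset.abs_sum_le_sum_abs (fun k => c k * w k) Finset.univ
    _ ≤ ∑ k, M * w k := Finset.sum_le_sum fun k _ => mul_le_mul_of_nonneg_right (hc k) (hw0 k)
    _ = M := by rw [← Finset.mul_sum, hw1, mul_one]

theorem tendstoUniformlyOn_telescope {α : Type*} {u : ℕ → α → ℝ} {a : ℕ → ℝ} {s : Set α}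
    (ha : Summable a) (hu : ∀ n, ∀ x ∈ s, |u (n + 1) x - u n x| ≤ a n) :
    TendstoUniformlyOn u (fun x => u 0 x + ∑' n, (u (n + 1) x - u n x)) atTop s := by
  have hsum := tendstoUniformlyOn_tsum_nat ha fun n x hx =>
    (Real.norm_eq_abs _).trans_le (hu n x hx)
  rw [Metric.tendstoUniformlyOn_iff] at hsum ⊢
  intro ε hε
  filter_upwards [hsum ε hε] with N hN x hx
  have hpartial : u N x = u 0 x + ∑ n ∈ Finset.range N, (u (n + 1) x - u n x) := by
    rw [Finset.sum_range_sub (u · x)]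
    ring
  rw [hpartial, dist_add_left]
  exact hN x hx

def osc {ι : Type*} (v : ι → ℝ) : ℝ := ⨆ a, ⨆ b, |v a - v b|

lemma osc_le {ι : Type*} [Nonempty ι] {v : ι → ℝ} {c : ℝ} (h : ∀ a b, |v a - v b| ≤ c) :
    osc v ≤ c :=
  ciSup_le fun a => ciSup_le fun b => h a b

section Osc

variable {ι : Type*} [Finite ι]

lemma abs_sub_le_osc (v : ι → ℝ) (a b : ι) : |v a - v b| ≤ osc v :=
  (le_ciSup (Finite.bddAbove_range fun b => |v a - v b|) b).trans
    (le_ciSup (Finite.bddAbove_range fun a => ⨆ b, |v a - v b|) a)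

lemma osc_nonneg [Nonempty ι] (v : ι → ℝ) : 0 ≤ osc v :=
  (abs_nonneg _).trans (abs_sub_le_osc v (Classical.arbitrary ι) (Classical.arbitrary ι))

end Osc

namespace SG

lemma f_p_self (i : Fin 3) : f i (p i) = p i := by
  rw [f]; ring

lemma f_p (i j : Fin 3) : f i (p j) = (p i + p j) / 2 := by
  rw [f, add_comm]

lemma f_inv (i : Fin 3) (z : ℂ) : 2 * f i z - p i = z := by
  rw [f]; ring

lemma f_injective (i : Fin 3) : Function.Injective (f i) := fun z w h => by
  rw [← f_inv i z, h, f_inv]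

lemma continuous_f (i : Fin 3) : Continuous (f i) := by
  unfold f; fun_prop

lemma dist_f (i : Fin 3) (z w : ℂ) : dist (f i z) (f i w) = dist z w / 2 := by
  rw [Complex.dist_eq, Complex.dist_eq, f, f, ← sub_div, add_sub_add_right_eq_sub, norm_div,
    Complex.norm_ofNat]

/-- Barycentric coordinates with respect to `p 0`, `p 1`, `p 2`. -/
def bary (z : ℂ) : Fin 3 → ℝ :=
  ![1 - z.re - z.im / √3, z.re - z.im / √3, 2 * z.im / √3]

lemma sum_bary (z : ℂ) : ∑ k, bary z k = 1 := by
  simp only [bary, Fin.sum_univ_three, Matrix.cons_val_zero, Matrix.cons_val_one,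
    Matrix.cons_val]
  ring

lemma bary_midpoint (z w : ℂ) (k : Fin 3) :
    bary ((z + w) / 2) k = (bary z k + bary w k) / 2 := by
  fin_cases k <;> simp [bary] <;> ring

lemma bary_p (i : Fin 3) : bary (p i) = Pi.single i (1 : ℝ) := by
  have h3 : √3 ≠ 0 := by positivity
  ext k
  fin_cases i <;> fin_cases k <;> simp [bary, p] <;> field_simp <;> norm_num

lemma bary_f (i : Fin 3) (z : ℂ) (k : Fin 3) :
    bary (f i z) k = (bary z k + (Pi.single i 1 : Fin 3 → ℝ) k) / 2 := by
  rw [f, bary_midpoint, bary_p]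

lemma bary_injective : Function.Injective bary := by
  intro z w h
  have h1 := congrFun h 1
  have h2 := congrFun h 2
  have h3 : √3 ≠ 0 := by positivity
  simp only [bary, Matrix.cons_val_one, Matrix.cons_val_zero, Matrix.cons_val] at h1 h2
  have him : z.im = w.im := by field_simp at h2; linarith
  exact Complex.ext (by rw [him] at h1; linarith) him

lemma continuous_bary (k : Fin 3) : Continuous fun z => bary z k := by
  fin_cases k <;> simp [bary] <;> fun_prop

section Gasket

variable {K : Set ℂ} (hK : IsSG K)
include hK

lemma IsSG.subset_iUnion : K ⊆ ⋃ i, f i '' K := by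
  intro z hz
  rw [hK.2.2] at hz
  simp only [mem_iUnion]
  rcases hz with (h | h) | h
  exacts [⟨0, h⟩, ⟨1, h⟩, ⟨2, h⟩]

lemma IsSG.mapsTo (i : Fin 3) : MapsTo (f i) K K := by
  intro z hz
  rw [hK.2.2]
  fin_cases i
  exacts [Or.inl (Or.inl ⟨z, hz, rfl⟩), Or.inl (Or.inr ⟨z, hz, rfl⟩), Or.inr ⟨z, hz, rfl⟩]

lemma IsSG.isClosed_image (i : Fin 3) : IsClosed (f i '' K) :=
  (hK.2.1.image (continuous_f i)).isClosed

/-- The point of `K` closest to `p i` is moved closer by `f i`, so it is `p i` itself. -/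
lemma IsSG.p_mem (i : Fin 3) : p i ∈ K := by
  obtain ⟨x, hxK, hmin⟩ :=
    hK.2.1.exists_isMinOn hK.1
      (by fun_prop : Continuous fun z => dist z (p i)).continuousOn
  have h := isMinOn_iff.mp hmin (f i x) (hK.mapsTo i hxK)
  rw [← f_p_self i, dist_f, f_p_self] at h
  have hx : dist x (p i) = 0 := le_antisymm (by linarith) dist_nonneg
  rwa [← dist_eq_zero.mp hx]

lemma IsSG.bary_nonneg {z : ℂ} (hz : z ∈ K) (k : Fin 3) : 0 ≤ bary z k :=
  nonneg_of_le_comp_of_subset_iUnion hK.2.1 hK.subset_iUnion (continuous_bary k).continuousOn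
    (c := 1 / 2) (by norm_num) (by norm_num) (fun i y _ => by
      have : 0 ≤ (Pi.single i 1 : Fin 3 → ℝ) k := by rw [Pi.single_apply]; positivity
      rw [bary_f]
      linarith) hz

/-- Points of `f l '' K` have `l`-th barycentric coordinate `≥ 1 / 2`; so a common point of
two cells has coordinates those of the midpoint `f i (p j)`. -/
lemma IsSG.eq_p_of_f_eq {i j : Fin 3} (hij : i ≠ j) {y y' : ℂ} (hy : y ∈ K) (hy' : y' ∈ K)
    (h : f i y = f j y') : y = p j := by
  have half_le : ∀ {l x}, x ∈ K → 1 / 2 ≤ bary (f l x) l := fun {l x} hx => by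
    rw [bary_f, Pi.single_eq_same]
    linarith [hK.bary_nonneg hx l]
  have hbary : bary (f i y) = bary (f i (p j)) := by
    ext k
    rw [eq_half_of_half_le (hK.bary_nonneg (hK.mapsTo i hy)) (sum_bary _) hij (half_le hy)
      (h ▸ half_le hy'), bary_f, bary_p, add_comm]
  exact f_injective i (bary_injective hbary)

end Gasket

/-- The values at the vertices `f i (p j)` of the cell `f i '' K` dictated by the
harmonic-type rule, given the values `v` at the vertices `p j` of `K`. -/
def harmExt (i : Fin 3) (v : Fin 3 → ℝ) : Fin 3 → ℝ :=
  fun j => if j = i then v i else (2 * v i + 2 * v j + v (other i j)) / 5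

lemma harmExt_self (i : Fin 3) (v : Fin 3 → ℝ) : harmExt i v i = v i := if_pos rfl

lemma harmExt_of_ne {i j : Fin 3} (h : j ≠ i) (v : Fin 3 → ℝ) :
    harmExt i v j = (2 * v i + 2 * v j + v (other i j)) / 5 := if_neg h

lemma other_comm (i j : Fin 3) : other i j = other j i := by
  rw [other, other, add_comm]

lemma other_eq {i j k : Fin 3} (hij : i ≠ j) (hik : i ≠ k) (hjk : j ≠ k) : other i j = k := by
  revert i j k; decide

lemma harmExt_comm {i j : Fin 3} (h : i ≠ j) (v : Fin 3 → ℝ) :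
    harmExt i v j = harmExt j v i := by
  rw [harmExt_of_ne h.symm, harmExt_of_ne h, other_comm]
  ring

lemma osc_harmExt_le (i : Fin 3) (v : Fin 3 → ℝ) : osc (harmExt i v) ≤ 3 / 5 * osc v := by
  have hosc := osc_nonneg v
  have hbound := fun a b => abs_le.mp (abs_sub_le_osc v a b)
  have from_i : ∀ b, |harmExt i v i - harmExt i v b| ≤ 3 / 5 * osc v := by
    intro b
    by_cases hb : b = i
    · simp [hb, hosc]
    rw [harmExt_self, harmExt_of_ne hb, abs_le]
    have := hbound i b
    have := hbound i (other i b)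
    constructor <;> linarith
  refine osc_le fun a b => ?_
  by_cases ha : a = i
  · exact ha ▸ from_i b
  by_cases hb : b = i
  · rw [hb, abs_sub_comm]
    exact from_i a
  by_cases hab : a = b
  · simp [hab, hosc]
  rw [harmExt_of_ne ha, harmExt_of_ne hb, other_eq (Ne.symm ha) (Ne.symm hb) hab,
    other_eq (Ne.symm hb) (Ne.symm ha) (Ne.symm hab), abs_le]
  have := hbound a b
  constructor <;> linarith

def aff (v : Fin 3 → ℝ) (z : ℂ) : ℝ := ∑ k, v k * bary z k

lemma aff_p (v : Fin 3 → ℝ) (i : Fin 3) : aff v (p i) = v i := by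
  simp [aff, bary_p, Pi.single_apply]

lemma continuous_aff (v : Fin 3 → ℝ) : Continuous (aff v) :=
  continuous_finsetSum _ fun k _ => continuous_const.mul (continuous_bary k)

lemma aff_f (v : Fin 3 → ℝ) (i : Fin 3) (y : ℂ) : aff v (f i y) = (aff v y + v i) / 2 := by
  have hsingle : ∑ k, v k * (Pi.single i 1 : Fin 3 → ℝ) k = v i := by simp [Pi.single_apply]
  simp only [aff, bary_f, ← hsingle, ← Finset.sum_add_distrib, Finset.sum_div]
  exact Finset.sum_congr rfl fun k _ => by ring

lemma abs_aff_harmExt_sub_aff_f_le {y : ℂ} (hy : ∀ k, 0 ≤ bary y k) (i : Fin 3)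
    (v : Fin 3 → ℝ) : |aff (harmExt i v) y - aff v (f i y)| ≤ osc v := by
  have hdiff : aff (harmExt i v) y - aff v (f i y) =
      ∑ k, (harmExt i v k - (v k + v i) / 2) * bary y k := by
    have hsplit : ∑ k, (harmExt i v k - (v k + v i) / 2) * bary y k =
        aff (harmExt i v) y - aff v y / 2 - v i / 2 * ∑ k, bary y k := by
      rw [aff, aff, Finset.mul_sum, Finset.sum_div, ← Finset.sum_sub_distrib,
        ← Finset.sum_sub_distrib]
      exact Finset.sum_congr rfl fun k _ => by ring
    rw [hsplit, sum_bary, aff_f]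
    ring
  rw [hdiff]
  refine abs_sum_mul_le_of_sum_eq_one hy (sum_bary y) fun k => ?_
  by_cases hk : k = i
  · simp [hk, harmExt_self, osc_nonneg]
  rw [harmExt_of_ne hk, abs_le]
  have := abs_le.mp (abs_sub_le_osc v (other i k) i)
  have := abs_le.mp (abs_sub_le_osc v (other i k) k)
  constructor <;> linarith

def cellOf (K : Set ℂ) (z : ℂ) : Fin 3 :=
  if h : ∃ i, z ∈ f i '' K then h.choose else 0

lemma mem_image_cellOf {K : Set ℂ} {z : ℂ} {i : Fin 3} (h : z ∈ f i '' K) :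
    z ∈ f (cellOf K z) '' K := by
  have h' : ∃ i, z ∈ f i '' K := ⟨i, h⟩
  rw [cellOf, dif_pos h']
  exact h'.choose_spec

/-- On every level-`n` cell `f_w '' K`, `approx K n v` is the affine interpolation of the vertex
values that the harmonic-type rule propagates from `v`. On `K`, the choice made by `cellOf` is
irrelevant (`approx_succ_f`). -/
def approx (K : Set ℂ) : ℕ → (Fin 3 → ℝ) → ℂ → ℝ
  | 0, v => aff v
  | n + 1, v => fun z => approx K n (harmExt (cellOf K z) v) (2 * z - p (cellOf K z))

section Approx

variable {K : Set ℂ} (hK : IsSG K)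
include hK

lemma approx_succ_f_of_approx_p {n : ℕ} (hn : ∀ v i, approx K n v (p i) = v i)
    (v : Fin 3 → ℝ) {i : Fin 3} {y : ℂ} (hy : y ∈ K) :
    approx K (n + 1) v (f i y) = approx K n (harmExt i v) y := by
  obtain ⟨y', hy', hcell⟩ := mem_image_cellOf (mem_image_of_mem (f i) hy)
  set c := cellOf K (f i y)
  change approx K n (harmExt c v) (2 * f i y - p c) = _
  rw [← hcell, f_inv]
  by_cases hci : c = i
  · rw [hci] at hcell ⊢
    rw [f_injective i hcell]
  · rw [hK.eq_p_of_f_eq hci hy' hy hcell, hK.eq_p_of_f_eq (Ne.symm hci) hy hy' hcell.symm,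
      hn, hn, harmExt_comm hci]

lemma approx_p (n : ℕ) (v : Fin 3 → ℝ) (i : Fin 3) : approx K n v (p i) = v i := by
  induction n generalizing v i with
  | zero => exact aff_p v i
  | succ n ih =>
    rw [← f_p_self i, approx_succ_f_of_approx_p hK ih v (hK.p_mem i), ih, harmExt_self]

lemma approx_succ_f (n : ℕ) (v : Fin 3 → ℝ) {i : Fin 3} {y : ℂ} (hy : y ∈ K) :
    approx K (n + 1) v (f i y) = approx K n (harmExt i v) y :=
  approx_succ_f_of_approx_p hK (approx_p hK n) v hy

lemma continuousOn_approx (n : ℕ) (v : Fin 3 → ℝ) : ContinuousOn (approx K n v) K := by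
  induction n generalizing v with
  | zero => exact (continuous_aff v).continuousOn
  | succ n ih =>
    refine ((locallyFinite_of_finite _).continuousOn_iUnion hK.isClosed_image fun i => ?_).mono
      hK.subset_iUnion
    refine ((ih (harmExt i v)).comp (by fun_prop : Continuous fun z => 2 * z - p i).continuousOn
      ?_).congr ?_
    · rintro _ ⟨y, hy, rfl⟩
      simpa only [f_inv] using hy
    · rintro _ ⟨y, hy, rfl⟩
      rw [approx_succ_f hK n v hy, Function.comp_apply, f_inv]

lemma abs_approx_succ_sub_le (n : ℕ) (v : Fin 3 → ℝ) {z : ℂ} (hz : z ∈ K) :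
    |approx K (n + 1) v z - approx K n v z| ≤ (3 / 5) ^ n * osc v := by
  induction n generalizing v z with
  | zero =>
    obtain ⟨i, y, hy, rfl⟩ : ∃ i, ∃ y ∈ K, f i y = z := by simpa using hK.subset_iUnion hz
    rw [approx_succ_f hK 0 v hy, pow_zero, one_mul]
    exact abs_aff_harmExt_sub_aff_f_le (hK.bary_nonneg hy) i v
  | succ n ih =>
    obtain ⟨i, y, hy, rfl⟩ : ∃ i, ∃ y ∈ K, f i y = z := by simpa using hK.subset_iUnion hz
    rw [approx_succ_f hK (n + 1) v hy, approx_succ_f hK n v hy]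
    calc _ ≤ (3 / 5) ^ n * osc (harmExt i v) := ih _ hy
      _ ≤ (3 / 5) ^ n * (3 / 5 * osc v) := by gcongr; exact osc_harmExt_le i v
      _ = (3 / 5) ^ (n + 1) * osc v := by ring

end Approx

def harmFun (K : Set ℂ) (v : Fin 3 → ℝ) (z : ℂ) : ℝ :=
  approx K 0 v z + ∑' n, (approx K (n + 1) v z - approx K n v z)

def wordExt (w : List (Fin 3)) (v : Fin 3 → ℝ) : Fin 3 → ℝ :=
  w.foldl (fun u i => harmExt i u) v

lemma wordExt_append_singleton (w : List (Fin 3)) (i : Fin 3) (v : Fin 3 → ℝ) :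
    wordExt (w ++ [i]) v = harmExt i (wordExt w v) := by
  simp [wordExt]

lemma fwl_singleton (i : Fin 3) (x : ℂ) : fwl [i] x = f i x := rfl

lemma fwl_append (w w' : List (Fin 3)) (x : ℂ) : fwl (w ++ w') x = fwl w (fwl w' x) := by
  induction w with
  | nil => rfl
  | cons a t ih => exact congrArg (f a) ih

lemma dist_fwl (w : List (Fin 3)) (x y : ℂ) :
    dist (fwl w x) (fwl w y) = dist x y / 2 ^ w.length := by
  induction w with
  | nil => simp [fwl]
  | cons a t ih =>
    simp only [fwl, Function.comp_apply, dist_f, ih, List.length_cons, pow_succ]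
    ring

section HarmFun

variable {K : Set ℂ} (hK : IsSG K)
include hK

lemma tendstoUniformlyOn_approx (v : Fin 3 → ℝ) :
    TendstoUniformlyOn (fun n => approx K n v) (harmFun K v) atTop K :=
  tendstoUniformlyOn_telescope
    ((summable_geometric_of_lt_one (by norm_num) (by norm_num)).mul_right (osc v))
    fun n _ hz => abs_approx_succ_sub_le hK n v hz

lemma continuousOn_harmFun (v : Fin 3 → ℝ) : ContinuousOn (harmFun K v) K :=
  (tendstoUniformlyOn_approx hK v).continuousOn
    (Eventually.of_forall fun n => continuousOn_approx hK n v).frequently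

lemma harmFun_p (v : Fin 3 → ℝ) (i : Fin 3) : harmFun K v (p i) = v i := by
  have hlim := (tendstoUniformlyOn_approx hK v).tendsto_at (hK.p_mem i)
  simp only [approx_p hK] at hlim
  exact (tendsto_const_nhds_iff.mp hlim).symm

lemma harmFun_f (v : Fin 3 → ℝ) (i : Fin 3) {y : ℂ} (hy : y ∈ K) :
    harmFun K v (f i y) = harmFun K (harmExt i v) y := by
  have hlim := (tendsto_add_atTop_iff_nat 1).mpr
    ((tendstoUniformlyOn_approx hK v).tendsto_at (hK.mapsTo i hy))
  simp only [approx_succ_f hK _ v hy] at hlim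
  exact tendsto_nhds_unique hlim ((tendstoUniformlyOn_approx hK _).tendsto_at hy)

lemma fwl_mem (w : List (Fin 3)) {x : ℂ} (hx : x ∈ K) : fwl w x ∈ K := by
  induction w with
  | nil => exact hx
  | cons a t ih => exact hK.mapsTo a ih

lemma harmFun_fwl_p (v : Fin 3 → ℝ) (w : List (Fin 3)) (a : Fin 3) :
    harmFun K v (fwl w (p a)) = wordExt w v a := by
  induction w generalizing v with
  | nil => exact harmFun_p hK v a
  | cons i t ih => exact (harmFun_f hK v i (fwl_mem hK t (hK.p_mem a))).trans (ih _)

lemma IsSG.exists_fwl_eq {z : ℂ} (hz : z ∈ K) (n : ℕ) :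
    ∃ w : List (Fin 3), ∃ y ∈ K, w.length = n ∧ z = fwl w y := by
  induction n generalizing z with
  | zero => exact ⟨[], z, hz, rfl, rfl⟩
  | succ n ih =>
    obtain ⟨i, y, hy, rfl⟩ : ∃ i, ∃ y ∈ K, f i y = z := by simpa using hK.subset_iUnion hz
    obtain ⟨w, y', hy', hlen, rfl⟩ := ih hy
    exact ⟨i :: w, y', hy', by simp [hlen], rfl⟩

lemma IsSG.subset_closure_vertices : K ⊆ closure (range fun w => fwl w (p 0)) := by
  intro z hz
  choose w y hy hlen hzw using hK.exists_fwl_eq hz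
  refine mem_closure_of_tendsto (f := fun n => fwl (w n) (p 0)) (b := atTop) ?_
    (Eventually.of_forall fun n => mem_range_self _)
  have hgeom : Tendsto (fun n : ℕ => Metric.diam K * (1 / 2) ^ n) atTop (𝓝 0) := by
    simpa using (tendsto_pow_atTop_nhds_zero_of_lt_one (r := (1 / 2 : ℝ)) (by norm_num)
      (by norm_num)).const_mul (Metric.diam K)
  refine tendsto_iff_dist_tendsto_zero.mpr
    (squeeze_zero (fun _ => dist_nonneg) (fun n => ?_) hgeom)
  rw [hzw n, dist_fwl, hlen, one_div_pow, mul_one_div]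
  gcongr
  exact Metric.dist_le_diam_of_mem hK.2.1.isBounded (hK.p_mem 0) (hy n)

end HarmFun

lemma IsHarm.apply_fwl_p {K : Set ℂ} {x0 x1 x2 : ℝ} {W : ℂ → ℝ} (hW : IsHarm K x0 x1 x2 W)
    (w : List (Fin 3)) (a : Fin 3) : W (fwl w (p a)) = wordExt w ![x0, x1, x2] a := by
  obtain ⟨-, h0, h1, h2, hrule⟩ := hW
  induction w using List.reverseRecOn generalizing a with
  | nil => fin_cases a <;> assumption
  | append_singleton w i ih =>
    rw [fwl_append, wordExt_append_singleton]
    by_cases hai : a = i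
    · rw [hai, fwl_singleton, f_p_self, ih, harmExt_self]
    · rw [harmExt_of_ne hai, ← ih, ← ih, ← ih, ← hrule w i a (Ne.symm hai), fwl_singleton,
        f_p]

lemma isHarm_harmFun {K : Set ℂ} (hK : IsSG K) (x0 x1 x2 : ℝ) :
    IsHarm K x0 x1 x2 (harmFun K ![x0, x1, x2]) := by
  refine ⟨continuousOn_harmFun hK _, harmFun_p hK _ 0, harmFun_p hK _ 1, harmFun_p hK _ 2,
    fun w i j hij => ?_⟩
  rw [← f_p, ← fwl_singleton, ← fwl_append, harmFun_fwl_p hK, harmFun_fwl_p hK,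
    harmFun_fwl_p hK, harmFun_fwl_p hK, wordExt_append_singleton, harmExt_of_ne hij.symm]

lemma IsHarm.eqOn {K : Set ℂ} (hK : IsSG K) {x0 x1 x2 : ℝ} {U V : ℂ → ℝ}
    (hU : IsHarm K x0 x1 x2 U) (hV : IsHarm K x0 x1 x2 V) : EqOn U V K := by
  refine EqOn.of_subset_closure ?_ hU.1 hV.1 ?_ hK.subset_closure_vertices
  · rintro _ ⟨w, rfl⟩
    rw [hU.apply_fwl_p, hV.apply_fwl_p]
  · rintro _ ⟨w, rfl⟩
    exact fwl_mem hK w (hK.p_mem 0)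

theorem statement5 (K : Set ℂ) (hK : IsSG K) (x0 x1 x2 : ℝ) :
    ∃ U : ℂ → ℝ, IsHarm K x0 x1 x2 U ∧
      ∀ V : ℂ → ℝ, IsHarm K x0 x1 x2 V → Set.EqOn U V K :=
  ⟨harmFun K ![x0, x1, x2], isHarm_harmFun hK x0 x1 x2,
    fun _ hV => (isHarm_harmFun hK x0 x1 x2).eqOn hK hV⟩

end SG
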